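/- arXiv:math/0702401 — 2 statements merged into one kernel-verified Lean document; each statement's English description precedes it below -/
import Mathlib

section
/- For every integer n ≥ 2 and every τ in the complex upper half-plane ℍ, the functions y_n satisfy the recursion y_{n-1}(τ)² · x_n(τ) = y_n(τ)² (the squared form of y_{n-1} = y_n/√(x_n)). -/
open Complex Filter Topology

/-- Jacobi theta function θ₂(τ) = ∑_{n∈ℤ} exp(πiτ(n+1/2)²). -/
noncomputable def θ₂ (τ : ℂ) : ℂ :=
  ∑' n : ℤ, Complex.exp (Real.pi * Complex.I * τ * ((n : ℂ) + 1/2)^2)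

/-- Jacobi theta function θ₃(τ) = ∑_{n∈ℤ} exp(πiτn²). -/
noncomputable def θ₃ (τ : ℂ) : ℂ :=
  ∑' n : ℤ, Complex.exp (Real.pi * Complex.I * τ * (n : ℂ)^2)

/-- x_n(τ) = 2θ₃(2^{n-1}τ)/θ₂(2^{n-1}τ). -/
noncomputable def xfun (n : ℕ) (τ : ℂ) : ℂ :=
  2 * θ₃ (2^(n-1) * τ) / θ₂ (2^(n-1) * τ)

/-- y_n(τ) = θ₂(8τ)/θ₂(2^{n-1}τ). -/
noncomputable def yfun (n : ℕ) (τ : ℂ) : ℂ :=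
  θ₂ (8 * τ) / θ₂ (2^(n-1) * τ)

/-! Splitting `ℤ²` into the pairs `(k + l, k - l)` and `(k + l + 1, k - l)` gives the product
formula `θ(z₁, τ) θ(z₂, τ) = θ(z₁ + z₂, 2τ) θ(z₁ - z₂, 2τ)
+ e^{2πiz₁ + πiτ} θ(z₁ + z₂ + τ, 2τ) θ(z₁ - z₂ + τ, 2τ)` for Jacobi's `θ(z, τ)`. At
`z₁ = z₂ = τ/2` it is Landen's identity `θ₂(τ)² = 2 θ₂(2τ) θ₃(2τ)`, and with `σ = 2^{n-2} τ` the
recursion is this identity multiplied by `θ₂(8τ)² / (θ₂(σ)² θ₂(2σ)²)`.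

To divide, `θ₂` must not vanish on `ℍ`. The functional equation reduces this to
`θ₄ = θ(1/2, ·) ≠ 0`. At `z₁ = 0, z₂ = 1/2` the product formula reads `θ₃(τ) θ₄(τ) = θ₄(2τ)²`
(the second summand vanishes at the zero `(1 + 2τ)/2` of `θ(·, 2τ)`), which carries the
nonvanishing of `θ₄` from large `Im τ`, where `θ₄ ≈ 1`, down to all of `ℍ`. -/

open Real

lemma Int.isCompl_range_add_sub :
    IsCompl (Set.range fun p : ℤ × ℤ => (p.1 + p.2, p.1 - p.2))
      (Set.range fun p : ℤ × ℤ => (p.1 + p.2 + 1, p.1 - p.2)) := by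
  constructor
  · rw [Set.disjoint_left]
    rintro _ ⟨⟨k, l⟩, rfl⟩ ⟨⟨k', l'⟩, h⟩
    simp only [Prod.ext_iff] at h
    omega
  · rw [codisjoint_iff_le_sup]
    rintro ⟨m, n⟩ -
    rcases Int.emod_two_eq_zero_or_one (m + n) with h | h
    · exact Or.inl ⟨((m + n) / 2, (m - n) / 2), by simp only [Prod.ext_iff]; omega⟩
    · exact Or.inr ⟨((m + n) / 2, (m - n) / 2), by simp only [Prod.ext_iff]; omega⟩

lemma HasSum.int_prod_of_add_sub {M : Type*} [AddCommMonoid M] [TopologicalSpace M]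
    [ContinuousAdd M] {F : ℤ × ℤ → M} {a b : M}
    (h₀ : HasSum (fun p : ℤ × ℤ => F (p.1 + p.2, p.1 - p.2)) a)
    (h₁ : HasSum (fun p : ℤ × ℤ => F (p.1 + p.2 + 1, p.1 - p.2)) b) :
    HasSum F (a + b) := by
  have inj₀ : Function.Injective fun p : ℤ × ℤ => (p.1 + p.2, p.1 - p.2) := by
    rintro ⟨k, l⟩ ⟨k', l'⟩ h
    simp only [Prod.ext_iff] at h ⊢
    omega
  have inj₁ : Function.Injective fun p : ℤ × ℤ => (p.1 + p.2 + 1, p.1 - p.2) := by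
    rintro ⟨k, l⟩ ⟨k', l'⟩ h
    simp only [Prod.ext_iff] at h ⊢
    omega
  exact (inj₀.hasSum_range_iff.2 h₀).add_isCompl Int.isCompl_range_add_sub
    (inj₁.hasSum_range_iff.2 h₁)

lemma forall_im_pos_of_eventually_of_two_mul {P : ℂ → Prop} (hP : ∀ᶠ τ in comap im atTop, P τ)
    (hdouble : ∀ τ : ℂ, 0 < τ.im → P (2 * τ) → P τ) {τ : ℂ} (hτ : 0 < τ.im) : P τ := by
  obtain ⟨T, hT⟩ := (eventually_comap.1 hP).exists_forall_of_atTop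
  obtain ⟨N, hN⟩ := pow_unbounded_of_one_lt (T / τ.im) one_lt_two
  rw [div_lt_iff₀ hτ] at hN
  induction N generalizing τ with
  | zero => exact hT _ (by linarith) τ rfl
  | succ N ih =>
    refine hdouble τ hτ (ih (by simpa using hτ) ?_)
    simpa [pow_succ, mul_assoc, mul_comm (2 : ℝ)] using hN

lemma hasSum_jacobiTheta₂_term_mul (z₁ z₂ : ℂ) {τ : ℂ} (hτ : 0 < τ.im) :
    HasSum (fun p : ℤ × ℤ => jacobiTheta₂_term p.1 z₁ τ * jacobiTheta₂_term p.2 z₂ τ)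
      (jacobiTheta₂ z₁ τ * jacobiTheta₂ z₂ τ) := by
  have h₁ := summable_norm_iff.2 ((summable_jacobiTheta₂_term_iff z₁ τ).2 hτ)
  have h₂ := summable_norm_iff.2 ((summable_jacobiTheta₂_term_iff z₂ τ).2 hτ)
  have h := summable_mul_of_summable_norm h₁ h₂
  exact HasSum.mul (f := fun n : ℤ => jacobiTheta₂_term n z₁ τ)
    (g := fun n : ℤ => jacobiTheta₂_term n z₂ τ)
    (hasSum_jacobiTheta₂_term z₁ hτ) (hasSum_jacobiTheta₂_term z₂ hτ) h

lemma jacobiTheta₂_term_add_mul_sub (k l : ℤ) (z₁ z₂ τ : ℂ) :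
    jacobiTheta₂_term (k + l) z₁ τ * jacobiTheta₂_term (k - l) z₂ τ =
      jacobiTheta₂_term k (z₁ + z₂) (2 * τ) * jacobiTheta₂_term l (z₁ - z₂) (2 * τ) := by
  simp only [jacobiTheta₂_term, ← Complex.exp_add]
  push_cast
  ring_nf

lemma jacobiTheta₂_term_add_add_one_mul_sub (k l : ℤ) (z₁ z₂ τ : ℂ) :
    jacobiTheta₂_term (k + l + 1) z₁ τ * jacobiTheta₂_term (k - l) z₂ τ =
      cexp (2 * π * I * z₁ + π * I * τ) * (jacobiTheta₂_term k (z₁ + z₂ + τ) (2 * τ) *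
        jacobiTheta₂_term l (z₁ - z₂ + τ) (2 * τ)) := by
  simp only [jacobiTheta₂_term, ← Complex.exp_add]
  push_cast
  ring_nf

theorem jacobiTheta₂_mul_jacobiTheta₂ (z₁ z₂ : ℂ) {τ : ℂ} (hτ : 0 < τ.im) :
    jacobiTheta₂ z₁ τ * jacobiTheta₂ z₂ τ =
      jacobiTheta₂ (z₁ + z₂) (2 * τ) * jacobiTheta₂ (z₁ - z₂) (2 * τ) +
        cexp (2 * π * I * z₁ + π * I * τ) *
          (jacobiTheta₂ (z₁ + z₂ + τ) (2 * τ) * jacobiTheta₂ (z₁ - z₂ + τ) (2 * τ)) := by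
  have h2τ : 0 < (2 * τ).im := by simpa using hτ
  refine (hasSum_jacobiTheta₂_term_mul z₁ z₂ hτ).unique (HasSum.int_prod_of_add_sub ?_ ?_)
  · simpa only [jacobiTheta₂_term_add_mul_sub] using hasSum_jacobiTheta₂_term_mul _ _ h2τ
  · simpa only [jacobiTheta₂_term_add_add_one_mul_sub] using
      (hasSum_jacobiTheta₂_term_mul _ _ h2τ).mul_left (cexp (2 * π * I * z₁ + π * I * τ))

lemma jacobiTheta₂_term_neg_one_sub_one_add_div_two (n : ℤ) (τ : ℂ) :
    jacobiTheta₂_term (-1 - n) ((1 + τ) / 2) τ = -jacobiTheta₂_term n ((1 + τ) / 2) τ := by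
  have h : 2 * π * I * ((-1 - n : ℤ) : ℂ) * ((1 + τ) / 2) + π * I * ((-1 - n : ℤ) : ℂ) ^ 2 * τ =
      2 * π * I * n * ((1 + τ) / 2) + π * I * n ^ 2 * τ + ((-n - 1 : ℤ) * (2 * π * I) + π * I) := by
    push_cast
    ring
  have hsign : cexp ((-n - 1 : ℤ) * (2 * π * I) + π * I) = -1 := by
    rw [Complex.exp_add, Complex.exp_int_mul_two_pi_mul_I, Complex.exp_pi_mul_I, one_mul]
  rw [jacobiTheta₂_term, jacobiTheta₂_term, h, Complex.exp_add, hsign, mul_neg_one]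

lemma jacobiTheta₂_one_add_div_two_eq_zero (τ : ℂ) : jacobiTheta₂ ((1 + τ) / 2) τ = 0 := by
  have h := (Equiv.subLeft (-1 : ℤ)).tsum_eq (jacobiTheta₂_term · ((1 + τ) / 2) τ)
  simp only [Equiv.subLeft_apply, jacobiTheta₂_term_neg_one_sub_one_add_div_two, tsum_neg] at h
  rw [jacobiTheta₂]
  exact neg_eq_self.mp h

lemma jacobiTheta₂_zero_mul_jacobiTheta₂_half {τ : ℂ} (hτ : 0 < τ.im) :
    jacobiTheta₂ 0 τ * jacobiTheta₂ (1 / 2) τ = jacobiTheta₂ (1 / 2) (2 * τ) ^ 2 := by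
  have hzero : jacobiTheta₂ (0 + 1 / 2 + τ) (2 * τ) = 0 := by
    rw [show (0 : ℂ) + 1 / 2 + τ = (1 + 2 * τ) / 2 by ring]
    exact jacobiTheta₂_one_add_div_two_eq_zero _
  rw [jacobiTheta₂_mul_jacobiTheta₂ 0 (1 / 2) hτ, hzero, zero_sub, jacobiTheta₂_neg_left]
  ring_nf

lemma jacobiTheta₂_div_two_sq {τ : ℂ} (hτ : 0 < τ.im) :
    jacobiTheta₂ (τ / 2) τ ^ 2 = 2 * (jacobiTheta₂ τ (2 * τ) * jacobiTheta₂ 0 (2 * τ)) := by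
  have hshift : jacobiTheta₂ (τ / 2 + τ / 2 + τ) (2 * τ) =
      cexp (-(2 * π * I * τ)) * jacobiTheta₂ 0 (2 * τ) := by
    rw [show τ / 2 + τ / 2 + τ = 0 + 2 * τ by ring, jacobiTheta₂_add_left']
    ring_nf
  rw [sq, jacobiTheta₂_mul_jacobiTheta₂ _ _ hτ, hshift, sub_self, zero_add, add_halves]
  have : cexp (2 * π * I * (τ / 2) + π * I * τ) * cexp (-(2 * π * I * τ)) = 1 := by
    rw [← Complex.exp_add, ← Complex.exp_zero]
    ring_nf
  linear_combination (jacobiTheta₂ τ (2 * τ) * jacobiTheta₂ 0 (2 * τ)) * this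

lemma jacobiTheta₂_half_eq_jacobiTheta_add_one (τ : ℂ) :
    jacobiTheta₂ (1 / 2) τ = jacobiTheta (τ + 1) := by
  refine tsum_congr fun n => ?_
  obtain ⟨m, hm⟩ := Int.even_mul_pred_self n
  have hm' : (n : ℂ) * (n - 1) = m + m := by exact_mod_cast hm
  rw [jacobiTheta₂_term, show π * I * (n : ℂ) ^ 2 * (τ + 1) =
      2 * π * I * n * (1 / 2) + π * I * n ^ 2 * τ + m * (2 * π * I) by
    linear_combination π * I * hm', Complex.exp_add _ ((m : ℂ) * _),
    Complex.exp_int_mul_two_pi_mul_I, mul_one]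

lemma eventually_jacobiTheta_ne_zero : ∀ᶠ τ in comap im atTop, jacobiTheta τ ≠ 0 := by
  have hexp : Tendsto (fun τ : ℂ => Real.exp (-π * τ.im)) (comap im atTop) (𝓝 0) :=
    Real.tendsto_exp_atBot.comp <|
      tendsto_comap.const_mul_atTop_of_neg (neg_lt_zero.2 Real.pi_pos)
  have h := (isBigO_at_im_infty_jacobiTheta_sub_one.trans_tendsto hexp).add_const 1
  simp only [sub_add_cancel, zero_add] at h
  exact h.eventually_ne one_ne_zero

lemma jacobiTheta₂_half_ne_zero {τ : ℂ} (hτ : 0 < τ.im) : jacobiTheta₂ (1 / 2) τ ≠ 0 := by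
  refine forall_im_pos_of_eventually_of_two_mul (P := fun τ => jacobiTheta₂ (1 / 2) τ ≠ 0) ?_
    (fun σ hσ h2σ h0 => h2σ ?_) hτ
  · have hshift : Tendsto (· + 1) (comap im atTop) (comap im atTop) :=
      tendsto_comap_iff.2 (by simpa [Function.comp_def] using tendsto_comap)
    simpa only [jacobiTheta₂_half_eq_jacobiTheta_add_one] using
      hshift.eventually eventually_jacobiTheta_ne_zero
  · rw [← pow_eq_zero_iff two_ne_zero, ← jacobiTheta₂_zero_mul_jacobiTheta₂_half hσ, h0, mul_zero]

lemma jacobiTheta₂_div_two_ne_zero {τ : ℂ} (hτ : 0 < τ.im) : jacobiTheta₂ (τ / 2) τ ≠ 0 := by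
  have hτ0 : τ ≠ 0 := by
    rintro rfl
    simp at hτ
  have him : 0 < (-1 / τ).im := by
    simpa [neg_div, ← neg_inv] using UpperHalfPlane.im_inv_neg_coe_pos ⟨τ, hτ⟩
  rw [jacobiTheta₂_functional_equation, show τ / 2 / τ = 1 / 2 by field_simp]
  refine mul_ne_zero (mul_ne_zero ?_ (Complex.exp_ne_zero _)) (jacobiTheta₂_half_ne_zero him)
  simp [Complex.cpow_eq_zero_iff, hτ0, I_ne_zero]

lemma θ₂_eq_exp_mul_jacobiTheta₂ (τ : ℂ) :
    θ₂ τ = cexp (π * I * τ / 4) * jacobiTheta₂ (τ / 2) τ := by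
  rw [θ₂, jacobiTheta₂, ← tsum_mul_left]
  refine tsum_congr fun n => ?_
  rw [jacobiTheta₂_term, ← Complex.exp_add]
  ring_nf

lemma θ₃_eq_jacobiTheta₂ (τ : ℂ) : θ₃ τ = jacobiTheta₂ 0 τ :=
  tsum_congr fun n => by simp only [jacobiTheta₂_term]; ring_nf

lemma θ₂_ne_zero {τ : ℂ} (hτ : 0 < τ.im) : θ₂ τ ≠ 0 := by
  rw [θ₂_eq_exp_mul_jacobiTheta₂]
  exact mul_ne_zero (Complex.exp_ne_zero _) (jacobiTheta₂_div_two_ne_zero hτ)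

lemma θ₂_sq {τ : ℂ} (hτ : 0 < τ.im) : θ₂ τ ^ 2 = 2 * θ₂ (2 * τ) * θ₃ (2 * τ) := by
  rw [θ₂_eq_exp_mul_jacobiTheta₂, θ₂_eq_exp_mul_jacobiTheta₂, θ₃_eq_jacobiTheta₂, mul_pow,
    jacobiTheta₂_div_two_sq hτ, mul_div_cancel_left₀ τ two_ne_zero, sq, ← Complex.exp_add]
  ring_nf

theorem y_recursion (n : ℕ) (hn : 2 ≤ n) (τ : ℂ) (hτ : 0 < τ.im) :
    yfun (n - 1) τ ^ 2 * xfun n τ = yfun n τ ^ 2 := by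
  obtain ⟨k, rfl⟩ := Nat.exists_eq_add_of_le' hn
  have hσ : 0 < ((2 : ℂ) ^ k * τ).im := by
    rw [show (2 : ℂ) ^ k = ((2 ^ k : ℝ) : ℂ) by push_cast; rfl, im_ofReal_mul]
    positivity
  rw [yfun, yfun, xfun, show k + 2 - 1 - 1 = k by omega, show k + 2 - 1 = k + 1 by omega,
    pow_succ' (2 : ℂ) k, mul_assoc]
  generalize (2 : ℂ) ^ k * τ = σ at hσ ⊢
  have h2σ : 0 < (2 * σ).im := by simpa using hσ
  have hθσ := θ₂_ne_zero hσ
  have hθ2σ := θ₂_ne_zero h2σ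
  field_simp
  linear_combination (-θ₂ (8 * τ) ^ 2) * θ₂_sq hσ
end

section
/- For every τ in the complex upper half-plane ℍ, the functions x₆ and y₆ satisfy y₆(τ)⁴ − x₆(τ)³ − 4·x₆(τ) = 0; explicitly, (θ₂(8τ)/θ₂(32τ))⁴ = (2θ₃(32τ)/θ₂(32τ))³ + 4·(2θ₃(32τ)/θ₂(32τ)). -/
open Complex Filter Topology

/-!
Writing `θ_c(σ) = ∑ₙ exp(πiσ(n + c)²)`, so that `θ₂ = θ_{1/2}` and `θ₃ = θ_0`, splitting the double
sum `θ_a θ_b` by the parity of `m + n` gives the product formula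
`θ_a(σ) θ_b(σ) = θ_{(a+b)/2}(2σ) θ_{(a-b)/2}(2σ) + θ_{(a+b+1)/2}(2σ) θ_{(a-b+1)/2}(2σ)`.
It yields the duplication formulas `θ₂(σ)² = 2 θ₂(2σ) θ₃(2σ)` and `θ₃(σ)² = θ₃(2σ)² + θ₂(2σ)²`;
applying them twice expresses `θ₂(8τ)⁴` as `8 θ₂ θ₃ (θ₃² + θ₂²)` at `32τ`, which after dividing
by `θ₂(32τ)⁴` is the equation `y⁴ = x³ + 4x`.
-/

open Real

def Int.sumDiffEquiv : (ℤ × ℤ) ⊕ (ℤ × ℤ) ≃ ℤ × ℤ where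
  toFun
    | .inl (k, l) => (k + l, k - l)
    | .inr (k, l) => (k + l + 1, k - l)
  invFun p :=
    if Even (p.1 + p.2) then .inl ((p.1 + p.2) / 2, (p.1 - p.2) / 2)
    else .inr ((p.1 + p.2 - 1) / 2, (p.1 - p.2 - 1) / 2)
  left_inv := by
    rintro (⟨k, l⟩ | ⟨k, l⟩)
    · have : Even (k + l + (k - l)) := ⟨k, by ring⟩
      simp only [this, if_true, Sum.inl.injEq, Prod.mk.injEq]
      omega
    · have : ¬ Even (k + l + 1 + (k - l)) := by rw [Int.not_even_iff_odd]; exact ⟨k, by ring⟩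
      simp only [this, if_false, Sum.inr.injEq, Prod.mk.injEq]
      omega
  right_inv := by
    rintro ⟨m, n⟩
    by_cases h : Even (m + n)
    · dsimp only
      rw [if_pos h, Prod.mk.injEq]
      rw [Int.even_iff] at h
      omega
    · dsimp only
      rw [if_neg h, Prod.mk.injEq]
      rw [Int.even_iff] at h
      omega

theorem tsum_mul_tsum_eq_tsum_sumDiff {R : Type*} [NormedRing R] [CompleteSpace R]
    {f g : ℤ → R} (hf : Summable (‖f ·‖)) (hg : Summable (‖g ·‖)) :
    (∑' m, f m) * (∑' n, g n) =
      (∑' p : ℤ × ℤ, f (p.1 + p.2) * g (p.1 - p.2)) +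
        ∑' p : ℤ × ℤ, f (p.1 + p.2 + 1) * g (p.1 - p.2) := by
  set F : ℤ × ℤ → R := fun p => f p.1 * g p.2
  have hF : Summable F := summable_mul_of_summable_norm hf hg
  have he := Int.sumDiffEquiv.injective
  calc (∑' m, f m) * (∑' n, g n) = ∑' p, F p := tsum_mul_tsum_of_summable_norm hf hg
    _ = ∑' q, F (Int.sumDiffEquiv q) := (Int.sumDiffEquiv.tsum_eq F).symm
    _ = _ := Summable.tsum_sum (hF.comp_injective (he.comp Sum.inl_injective))
      (hF.comp_injective (he.comp Sum.inr_injective))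

noncomputable def thetaChar (c σ : ℂ) : ℂ :=
  ∑' n : ℤ, cexp (π * I * σ * (n + c) ^ 2)

theorem θ₂_eq_thetaChar (σ : ℂ) : θ₂ σ = thetaChar (1 / 2) σ := rfl

theorem θ₃_eq_thetaChar (σ : ℂ) : θ₃ σ = thetaChar 0 σ := by
  simp only [θ₃, thetaChar, add_zero]

theorem summable_norm_thetaChar_term (c : ℂ) {σ : ℂ} (hσ : 0 < σ.im) :
    Summable fun n : ℤ => ‖cexp (π * I * σ * (n + c) ^ 2)‖ := by
  have hterm (n : ℤ) : cexp (π * I * σ * (n + c) ^ 2) =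
      cexp (π * I * σ * c ^ 2) * jacobiTheta₂_term n (c * σ) σ := by
    rw [jacobiTheta₂_term, ← Complex.exp_add]
    ring_nf
  have hbound := summable_pow_mul_jacobiTheta₂_term_bound |(c * σ).im| hσ 0
  have hjac : Summable fun n : ℤ => ‖jacobiTheta₂_term n (c * σ) σ‖ :=
    hbound.of_nonneg_of_le (fun n => norm_nonneg _) fun n => by
      simpa only [pow_zero, one_mul] using norm_jacobiTheta₂_term_le hσ le_rfl le_rfl n
  simpa only [hterm, norm_mul] using hjac.mul_left ‖cexp (π * I * σ * c ^ 2)‖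

theorem thetaChar_add_one (c σ : ℂ) : thetaChar (c + 1) σ = thetaChar c σ := by
  rw [thetaChar, thetaChar,
    ← (Equiv.addRight (1 : ℤ)).tsum_eq fun n : ℤ => cexp (π * I * σ * (n + c) ^ 2)]
  refine tsum_congr fun n => ?_
  simp only [Equiv.coe_addRight, Int.cast_add, Int.cast_one]
  ring_nf

/-- The product formula, from `(m + a)² + (n + b)² = 2(k + (a+b)/2)² + 2(l + (a-b)/2)²`
for `(m, n) = (k + l, k - l)`, and its analogue for `(m, n) = (k + l + 1, k - l)`. -/
theorem thetaChar_mul_thetaChar (a b : ℂ) {σ : ℂ} (hσ : 0 < σ.im) :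
    thetaChar a σ * thetaChar b σ =
      thetaChar ((a + b) / 2) (2 * σ) * thetaChar ((a - b) / 2) (2 * σ) +
        thetaChar ((a + b + 1) / 2) (2 * σ) * thetaChar ((a - b + 1) / 2) (2 * σ) := by
  have h2σ : 0 < (2 * σ).im := by simpa using hσ
  simp only [thetaChar]
  rw [tsum_mul_tsum_eq_tsum_sumDiff (summable_norm_thetaChar_term a hσ)
    (summable_norm_thetaChar_term b hσ),
    tsum_mul_tsum_of_summable_norm (summable_norm_thetaChar_term _ h2σ)
      (summable_norm_thetaChar_term _ h2σ),
    tsum_mul_tsum_of_summable_norm (summable_norm_thetaChar_term _ h2σ)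
      (summable_norm_thetaChar_term _ h2σ)]
  congr 1 <;> refine tsum_congr fun p => ?_ <;> rw [← Complex.exp_add, ← Complex.exp_add] <;>
    push_cast <;> ring_nf

theorem θ₂_sq_s5 {σ : ℂ} (hσ : 0 < σ.im) : θ₂ σ ^ 2 = 2 * θ₂ (2 * σ) * θ₃ (2 * σ) := by
  simp only [θ₂_eq_thetaChar, θ₃_eq_thetaChar, sq, thetaChar_mul_thetaChar _ _ hσ]
  norm_num [show thetaChar 1 (2 * σ) = thetaChar 0 (2 * σ) by simpa using thetaChar_add_one 0 _]
  ring

theorem θ₃_sq {σ : ℂ} (hσ : 0 < σ.im) : θ₃ σ ^ 2 = θ₃ (2 * σ) ^ 2 + θ₂ (2 * σ) ^ 2 := by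
  simp only [θ₂_eq_thetaChar, θ₃_eq_thetaChar, sq, thetaChar_mul_thetaChar _ _ hσ]
  norm_num

theorem θ₂_pow_four {σ : ℂ} (hσ : 0 < σ.im) :
    θ₂ σ ^ 4 = 8 * θ₂ (4 * σ) * θ₃ (4 * σ) * (θ₃ (4 * σ) ^ 2 + θ₂ (4 * σ) ^ 2) := by
  have h2σ : 0 < (2 * σ).im := by simpa using hσ
  have h4σ : 2 * (2 * σ) = 4 * σ := by ring
  calc θ₂ σ ^ 4 = (θ₂ σ ^ 2) ^ 2 := by ring
    _ = 4 * θ₂ (2 * σ) ^ 2 * θ₃ (2 * σ) ^ 2 := by rw [θ₂_sq_s5 hσ]; ring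
    _ = _ := by rw [θ₂_sq_s5 h2σ, θ₃_sq h2σ, h4σ]; ring

theorem X0_64_equation (τ : ℂ) (hτ : 0 < τ.im) :
    yfun 6 τ ^ 4 - xfun 6 τ ^ 3 - 4 * xfun 6 τ = 0 ∧
    (θ₂ (8 * τ) / θ₂ (32 * τ)) ^ 4 =
      (2 * θ₃ (32 * τ) / θ₂ (32 * τ)) ^ 3 + 4 * (2 * θ₃ (32 * τ) / θ₂ (32 * τ)) := by
  have key : θ₂ (8 * τ) ^ 4 =
      8 * θ₂ (32 * τ) * θ₃ (32 * τ) * (θ₃ (32 * τ) ^ 2 + θ₂ (32 * τ) ^ 2) := by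
    have h8τ : 0 < (8 * τ).im := by simpa using hτ
    simpa [← mul_assoc, show (4 * 8 : ℂ) = 32 by norm_num] using θ₂_pow_four h8τ
  have hx : xfun 6 τ = 2 * θ₃ (32 * τ) / θ₂ (32 * τ) := by norm_num [xfun]
  have hy : yfun 6 τ = θ₂ (8 * τ) / θ₂ (32 * τ) := by norm_num [yfun]
  have hmodular : (θ₂ (8 * τ) / θ₂ (32 * τ)) ^ 4 =
      (2 * θ₃ (32 * τ) / θ₂ (32 * τ)) ^ 3 + 4 * (2 * θ₃ (32 * τ) / θ₂ (32 * τ)) := by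
    rcases eq_or_ne (θ₂ (32 * τ)) 0 with h | h
    · simp [h]
    · generalize θ₂ (32 * τ) = a at h key ⊢
      generalize θ₃ (32 * τ) = b at key ⊢
      field_simp
      linear_combination key
  exact ⟨by rw [hx, hy]; linear_combination hmodular, hmodular⟩
end
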